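/- Let K be the field of fractions of ℚ[x₀,x₁,x₂,x₃,x₄,x₅], set A = (x₂x₄+x₃x₅)/(x₀x₁), B = (x₁x₄+x₀x₅)/(x₂x₃), C = (x₀x₂+x₁x₃)/(x₄x₅), and let τ'₁, τ'₂, τ'₃ be the maps on K⁶ defined by: τ'₁ replaces (v₀,v₁) by ((v₂v₄+v₃v₅)/v₁, (v₂v₄+v₃v₅)/v₀); τ'₂ replaces (v₂,v₃) by ((v₁v₄+v₀v₅)/v₃, (v₁v₄+v₀v₅)/v₂); τ'₃ replaces (v₄,v₅) by ((v₀v₂+v₁v₃)/v₅, (v₀v₂+v₁v₃)/v₄); each fixes the remaining entries. For natural numbers s, t, let w be the word consisting of the block (1,2,3) repeated 2t times followed by the block (2,1,3) repeated 2s times, and let v be the result of applying the maps τ'₍letter₎ to X = (x₀,…,x₅) in left-to-right order along w. Then v₀ = x₀·A^{3s²+3st+3t²}·B^{3s²+3st+3t²+s−t}·C^{3s²+3st+3t²−s−2t} and v₁ = x₁·A^{3s²+3st+3t²}·B^{3s²+3st+3t²+s−t}·C^{3s²+3st+3t²−s−2t}. -/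
import Mathlib

noncomputable section

/-- The polynomial ring ℚ[x₀,…,x₅]. -/
abbrev P : Type := MvPolynomial (Fin 6) ℚ

/-- K = Frac(ℚ[x₀,…,x₅]). -/
abbrev K : Type := FractionRing P

/-- The images of the variables x₀,…,x₅ in K. -/
def x (i : Fin 6) : K := algebraMap P K (MvPolynomial.X i)

/-- τ'₁ : replaces (v₀, v₁) by ((v₂v₄+v₃v₅)/v₁, (v₂v₄+v₃v₅)/v₀). -/
def tau1 (v : Fin 6 → K) : Fin 6 → K := fun k =>
  if k = 0 then (v 2 * v 4 + v 3 * v 5) / v 1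
  else if k = 1 then (v 2 * v 4 + v 3 * v 5) / v 0
  else v k

/-- τ'₂ : replaces (v₂, v₃) by ((v₁v₄+v₀v₅)/v₃, (v₁v₄+v₀v₅)/v₂). -/
def tau2 (v : Fin 6 → K) : Fin 6 → K := fun k =>
  if k = 2 then (v 1 * v 4 + v 0 * v 5) / v 3
  else if k = 3 then (v 1 * v 4 + v 0 * v 5) / v 2
  else v k

/-- τ'₃ : replaces (v₄, v₅) by ((v₀v₂+v₁v₃)/v₅, (v₀v₂+v₁v₃)/v₄). -/
def tau3 (v : Fin 6 → K) : Fin 6 → K := fun k =>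
  if k = 4 then (v 0 * v 2 + v 1 * v 3) / v 5
  else if k = 5 then (v 0 * v 2 + v 1 * v 3) / v 4
  else v k

/-- τ' indexed by Fin 3: `tau i` is τ'_{i+1}. -/
def tau : Fin 3 → (Fin 6 → K) → (Fin 6 → K)
  | 0 => tau1
  | 1 => tau2
  | 2 => tau3

/-- The initial labeled seed X = (x₀,…,x₅). -/
def X0 : Fin 6 → K := x

/-- Apply the maps τ'₍a₁₎, …, τ'₍aₙ₎ along the word `w` in left-to-right order. -/
def applyWord (w : List (Fin 3)) (v : Fin 6 → K) : Fin 6 → K :=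
  w.foldl (fun u a => tau a u) v

/-- A = (x₂x₄+x₃x₅)/(x₀x₁). -/
def A : K := (x 2 * x 4 + x 3 * x 5) / (x 0 * x 1)

/-- B = (x₁x₄+x₀x₅)/(x₂x₃). -/
def B : K := (x 1 * x 4 + x 0 * x 5) / (x 2 * x 3)

/-- C = (x₀x₂+x₁x₃)/(x₄x₅). -/
def C : K := (x 0 * x 2 + x 1 * x 3) / (x 4 * x 5)

/-- The canonical path (123)^{2t}(213)^{2s} to the even alcove (3s, 3t)
(letters 1,2,3 are encoded as 0,1,2 in `Fin 3`). -/
def word7 (s t : ℕ) : List (Fin 3) :=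
  (List.replicate (2 * t) ([0, 1, 2] : List (Fin 3))).flatten ++
    (List.replicate (2 * s) ([1, 0, 2] : List (Fin 3))).flatten

/-! ### Auxiliary lemmas -/

lemma x_ne (i : Fin 6) : x i ≠ 0 := by
  simp only [x, ne_eq, IsFractionRing.to_map_eq_zero_iff]
  exact MvPolynomial.X_ne_zero i

lemma pair_ne (i j k l : Fin 6) : x i * x j + x k * x l ≠ 0 := by
  have h : x i * x j + x k * x l = algebraMap P K
      (MvPolynomial.X i * MvPolynomial.X j + MvPolynomial.X k * MvPolynomial.X l) := by
    simp [x, map_add, map_mul]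
  rw [h, ne_eq, IsFractionRing.to_map_eq_zero_iff]
  intro hp
  have := congrArg (MvPolynomial.eval (fun _ => (1:ℚ))) hp
  simp at this

lemma A_ne : A ≠ 0 := div_ne_zero (pair_ne 2 4 3 5) (mul_ne_zero (x_ne 0) (x_ne 1))
lemma B_ne : B ≠ 0 := div_ne_zero (pair_ne 1 4 0 5) (mul_ne_zero (x_ne 2) (x_ne 3))
lemma C_ne : C ≠ 0 := div_ne_zero (pair_ne 0 2 1 3) (mul_ne_zero (x_ne 4) (x_ne 5))

lemma nA : x 2 * x 4 + x 3 * x 5 = A * (x 0 * x 1) := by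
  rw [A, div_mul_cancel₀]
  exact mul_ne_zero (x_ne 0) (x_ne 1)

lemma nB : x 1 * x 4 + x 0 * x 5 = B * (x 2 * x 3) := by
  rw [B, div_mul_cancel₀]
  exact mul_ne_zero (x_ne 2) (x_ne 3)

lemma nC : x 0 * x 2 + x 1 * x 3 = C * (x 4 * x 5) := by
  rw [C, div_mul_cancel₀]
  exact mul_ne_zero (x_ne 4) (x_ne 5)

/-- The Laurent monomial A^a B^b C^c. -/
def mono (a b c : ℤ) : K := A ^ a * B ^ b * C ^ c

lemma mono_ne (a b c : ℤ) : mono a b c ≠ 0 :=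
  mul_ne_zero (mul_ne_zero (zpow_ne_zero _ A_ne) (zpow_ne_zero _ B_ne)) (zpow_ne_zero _ C_ne)

lemma mono_mul (a b c a' b' c' : ℤ) :
    mono a b c * mono a' b' c' = mono (a + a') (b + b') (c + c') := by
  simp only [mono, zpow_add₀ A_ne, zpow_add₀ B_ne, zpow_add₀ C_ne]; ring

lemma A_mul_mono (a b c : ℤ) : A * mono a b c = mono (a + 1) b c := by
  simp only [mono, zpow_add_one₀ A_ne]; ring

lemma B_mul_mono (a b c : ℤ) : B * mono a b c = mono a (b + 1) c := by
  simp only [mono, zpow_add_one₀ B_ne]; ring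

lemma C_mul_mono (a b c : ℤ) : C * mono a b c = mono a b (c + 1) := by
  simp only [mono, zpow_add_one₀ C_ne]; ring

lemma div_mono (y z : K) (hz : z ≠ 0) (p q r p' q' r' : ℤ) :
    (y * z * mono p q r) / (z * mono p' q' r') = y * mono (p - p') (q - q') (r - r') := by
  rw [div_eq_iff (mul_ne_zero hz (mono_ne _ _ _))]
  have h2 : mono (p - p') (q - q') (r - r') * mono p' q' r' = mono p q r := by
    rw [mono_mul]
    have e1 : p - p' + p' = p := by ring
    have e2 : q - q' + q' = q := by ring
    have e3 : r - r' + r' = r := by ring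
    rw [e1, e2, e3]
  rw [← h2]; ring

/-- A state where each coordinate is `x k` times a Laurent monomial in A, B, C. -/
def IsM (v : Fin 6 → K)
    (a0 b0 c0 a1 b1 c1 a2 b2 c2 a3 b3 c3 a4 b4 c4 a5 b5 c5 : ℤ) : Prop :=
  v 0 = x 0 * mono a0 b0 c0 ∧ v 1 = x 1 * mono a1 b1 c1 ∧
  v 2 = x 2 * mono a2 b2 c2 ∧ v 3 = x 3 * mono a3 b3 c3 ∧
  v 4 = x 4 * mono a4 b4 c4 ∧ v 5 = x 5 * mono a5 b5 c5

lemma isM_congr {v : Fin 6 → K}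
    {a0 b0 c0 a1 b1 c1 a2 b2 c2 a3 b3 c3 a4 b4 c4 a5 b5 c5 : ℤ}
    (h : IsM v a0 b0 c0 a1 b1 c1 a2 b2 c2 a3 b3 c3 a4 b4 c4 a5 b5 c5)
    {A0 B0 C0 A1 B1 C1 A2 B2 C2 A3 B3 C3 A4 B4 C4 A5 B5 C5 : ℤ}
    (e1 : A0 = a0) (e2 : B0 = b0) (e3 : C0 = c0)
    (e4 : A1 = a1) (e5 : B1 = b1) (e6 : C1 = c1)
    (e7 : A2 = a2) (e8 : B2 = b2) (e9 : C2 = c2)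
    (e10 : A3 = a3) (e11 : B3 = b3) (e12 : C3 = c3)
    (e13 : A4 = a4) (e14 : B4 = b4) (e15 : C4 = c4)
    (e16 : A5 = a5) (e17 : B5 = b5) (e18 : C5 = c5) :
    IsM v A0 B0 C0 A1 B1 C1 A2 B2 C2 A3 B3 C3 A4 B4 C4 A5 B5 C5 := by
  subst e1 e2 e3 e4 e5 e6 e7 e8 e9 e10 e11 e12 e13 e14 e15 e16 e17 e18
  exact h

lemma isM_tau1 {v : Fin 6 → K}
    {a0 b0 c0 a1 b1 c1 a2 b2 c2 a3 b3 c3 a4 b4 c4 a5 b5 c5 : ℤ}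
    (h : IsM v a0 b0 c0 a1 b1 c1 a2 b2 c2 a3 b3 c3 a4 b4 c4 a5 b5 c5)
    (ha : a2 + a4 = a3 + a5) (hb : b2 + b4 = b3 + b5) (hc : c2 + c4 = c3 + c5) :
    IsM (tau1 v) (a2 + a4 + 1 - a1) (b2 + b4 - b1) (c2 + c4 - c1)
      (a2 + a4 + 1 - a0) (b2 + b4 - b0) (c2 + c4 - c0)
      a2 b2 c2 a3 b3 c3 a4 b4 c4 a5 b5 c5 := by
  obtain ⟨h0, h1, h2, h3, h4, h5⟩ := h
  have hnum : v 2 * v 4 + v 3 * v 5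
      = x 0 * x 1 * mono (a2 + a4 + 1) (b2 + b4) (c2 + c4) := by
    rw [h2, h3, h4, h5]
    have e1 : x 2 * mono a2 b2 c2 * (x 4 * mono a4 b4 c4)
        = x 2 * x 4 * mono (a2 + a4) (b2 + b4) (c2 + c4) := by rw [← mono_mul]; ring
    have e2 : x 3 * mono a3 b3 c3 * (x 5 * mono a5 b5 c5)
        = x 3 * x 5 * mono (a2 + a4) (b2 + b4) (c2 + c4) := by
      rw [ha, hb, hc, ← mono_mul]; ring
    rw [e1, e2, ← add_mul, nA,
      show A * (x 0 * x 1) * mono (a2 + a4) (b2 + b4) (c2 + c4)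
        = x 0 * x 1 * (A * mono (a2 + a4) (b2 + b4) (c2 + c4)) from by ring,
      A_mul_mono]
  refine ⟨?_, ?_, ?_, ?_, ?_, ?_⟩
  · rw [show tau1 v 0 = (v 2 * v 4 + v 3 * v 5) / v 1 from by simp [tau1], hnum, h1]
    exact div_mono _ _ (x_ne 1) _ _ _ _ _ _
  · rw [show tau1 v 1 = (v 2 * v 4 + v 3 * v 5) / v 0 from by simp [tau1], hnum, h0,
      show x 0 * x 1 * mono (a2 + a4 + 1) (b2 + b4) (c2 + c4)
        = x 1 * x 0 * mono (a2 + a4 + 1) (b2 + b4) (c2 + c4) from by ring]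
    exact div_mono _ _ (x_ne 0) _ _ _ _ _ _
  · simpa [tau1] using h2
  · simpa [tau1] using h3
  · simpa [tau1] using h4
  · simpa [tau1] using h5

lemma isM_tau2 {v : Fin 6 → K}
    {a0 b0 c0 a1 b1 c1 a2 b2 c2 a3 b3 c3 a4 b4 c4 a5 b5 c5 : ℤ}
    (h : IsM v a0 b0 c0 a1 b1 c1 a2 b2 c2 a3 b3 c3 a4 b4 c4 a5 b5 c5)
    (ha : a1 + a4 = a0 + a5) (hb : b1 + b4 = b0 + b5) (hc : c1 + c4 = c0 + c5) :
    IsM (tau2 v) a0 b0 c0 a1 b1 c1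
      (a1 + a4 - a3) (b1 + b4 + 1 - b3) (c1 + c4 - c3)
      (a1 + a4 - a2) (b1 + b4 + 1 - b2) (c1 + c4 - c2)
      a4 b4 c4 a5 b5 c5 := by
  obtain ⟨h0, h1, h2, h3, h4, h5⟩ := h
  have hnum : v 1 * v 4 + v 0 * v 5
      = x 2 * x 3 * mono (a1 + a4) (b1 + b4 + 1) (c1 + c4) := by
    rw [h0, h1, h4, h5]
    have e1 : x 1 * mono a1 b1 c1 * (x 4 * mono a4 b4 c4)
        = x 1 * x 4 * mono (a1 + a4) (b1 + b4) (c1 + c4) := by rw [← mono_mul]; ring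
    have e2 : x 0 * mono a0 b0 c0 * (x 5 * mono a5 b5 c5)
        = x 0 * x 5 * mono (a1 + a4) (b1 + b4) (c1 + c4) := by
      rw [ha, hb, hc, ← mono_mul]; ring
    rw [e1, e2, ← add_mul, nB,
      show B * (x 2 * x 3) * mono (a1 + a4) (b1 + b4) (c1 + c4)
        = x 2 * x 3 * (B * mono (a1 + a4) (b1 + b4) (c1 + c4)) from by ring,
      B_mul_mono]
  refine ⟨?_, ?_, ?_, ?_, ?_, ?_⟩
  · simpa [tau2] using h0
  · simpa [tau2] using h1
  · rw [show tau2 v 2 = (v 1 * v 4 + v 0 * v 5) / v 3 from by simp [tau2], hnum, h3,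
      show x 2 * x 3 * mono (a1 + a4) (b1 + b4 + 1) (c1 + c4)
        = x 2 * x 3 * mono (a1 + a4) (b1 + b4 + 1) (c1 + c4) from rfl]
    exact div_mono _ _ (x_ne 3) _ _ _ _ _ _
  · rw [show tau2 v 3 = (v 1 * v 4 + v 0 * v 5) / v 2 from by simp [tau2], hnum, h2,
      show x 2 * x 3 * mono (a1 + a4) (b1 + b4 + 1) (c1 + c4)
        = x 3 * x 2 * mono (a1 + a4) (b1 + b4 + 1) (c1 + c4) from by ring]
    exact div_mono _ _ (x_ne 2) _ _ _ _ _ _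
  · simpa [tau2] using h4
  · simpa [tau2] using h5

lemma isM_tau3 {v : Fin 6 → K}
    {a0 b0 c0 a1 b1 c1 a2 b2 c2 a3 b3 c3 a4 b4 c4 a5 b5 c5 : ℤ}
    (h : IsM v a0 b0 c0 a1 b1 c1 a2 b2 c2 a3 b3 c3 a4 b4 c4 a5 b5 c5)
    (ha : a0 + a2 = a1 + a3) (hb : b0 + b2 = b1 + b3) (hc : c0 + c2 = c1 + c3) :
    IsM (tau3 v) a0 b0 c0 a1 b1 c1 a2 b2 c2 a3 b3 c3
      (a0 + a2 - a5) (b0 + b2 - b5) (c0 + c2 + 1 - c5)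
      (a0 + a2 - a4) (b0 + b2 - b4) (c0 + c2 + 1 - c4) := by
  obtain ⟨h0, h1, h2, h3, h4, h5⟩ := h
  have hnum : v 0 * v 2 + v 1 * v 3
      = x 4 * x 5 * mono (a0 + a2) (b0 + b2) (c0 + c2 + 1) := by
    rw [h0, h1, h2, h3]
    have e1 : x 0 * mono a0 b0 c0 * (x 2 * mono a2 b2 c2)
        = x 0 * x 2 * mono (a0 + a2) (b0 + b2) (c0 + c2) := by rw [← mono_mul]; ring
    have e2 : x 1 * mono a1 b1 c1 * (x 3 * mono a3 b3 c3)
        = x 1 * x 3 * mono (a0 + a2) (b0 + b2) (c0 + c2) := by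
      rw [ha, hb, hc, ← mono_mul]; ring
    rw [e1, e2, ← add_mul, nC,
      show C * (x 4 * x 5) * mono (a0 + a2) (b0 + b2) (c0 + c2)
        = x 4 * x 5 * (C * mono (a0 + a2) (b0 + b2) (c0 + c2)) from by ring,
      C_mul_mono]
  refine ⟨?_, ?_, ?_, ?_, ?_, ?_⟩
  · simpa [tau3] using h0
  · simpa [tau3] using h1
  · simpa [tau3] using h2
  · simpa [tau3] using h3
  · rw [show tau3 v 4 = (v 0 * v 2 + v 1 * v 3) / v 5 from by simp [tau3], hnum, h5]
    exact div_mono _ _ (x_ne 5) _ _ _ _ _ _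
  · rw [show tau3 v 5 = (v 0 * v 2 + v 1 * v 3) / v 4 from by simp [tau3], hnum, h4,
      show x 4 * x 5 * mono (a0 + a2) (b0 + b2) (c0 + c2 + 1)
        = x 5 * x 4 * mono (a0 + a2) (b0 + b2) (c0 + c2 + 1) from by ring]
    exact div_mono _ _ (x_ne 4) _ _ _ _ _ _

/-- The quadratic part of the exponents. -/
def Qz (σ τ : ℤ) : ℤ := 3 * σ ^ 2 + 3 * σ * τ + 3 * τ ^ 2

/-- The closed-form state after reaching lattice point (σ, τ). -/
def EM (σ τ : ℤ) (v : Fin 6 → K) : Prop :=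
  IsM v (Qz σ τ) (Qz σ τ + σ - τ) (Qz σ τ - σ - 2 * τ)
        (Qz σ τ) (Qz σ τ + σ - τ) (Qz σ τ - σ - 2 * τ)
        (Qz σ τ - σ + τ) (Qz σ τ) (Qz σ τ - 2 * σ - τ)
        (Qz σ τ - σ + τ) (Qz σ τ) (Qz σ τ - 2 * σ - τ)
        (Qz σ τ + σ + 2 * τ) (Qz σ τ + 2 * σ + τ) (Qz σ τ)
        (Qz σ τ + σ + 2 * τ) (Qz σ τ + 2 * σ + τ) (Qz σ τ)

lemma stepT (σ τ : ℤ) (v : Fin 6 → K) (h : EM σ τ v) :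
    EM σ (τ + 1) (tau3 (tau2 (tau1 (tau3 (tau2 (tau1 v)))))) := by
  unfold EM at h ⊢
  have h1 := isM_tau1 h (by ring) (by ring) (by ring)
  have h2 := isM_tau2 h1 (by ring) (by ring) (by ring)
  have h3 := isM_tau3 h2 (by ring) (by ring) (by ring)
  have h4 := isM_tau1 h3 (by ring) (by ring) (by ring)
  have h5 := isM_tau2 h4 (by ring) (by ring) (by ring)
  have h6 := isM_tau3 h5 (by ring) (by ring) (by ring)
  exact isM_congr h6
    (by unfold Qz; ring) (by unfold Qz; ring) (by unfold Qz; ring)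
    (by unfold Qz; ring) (by unfold Qz; ring) (by unfold Qz; ring)
    (by unfold Qz; ring) (by unfold Qz; ring) (by unfold Qz; ring)
    (by unfold Qz; ring) (by unfold Qz; ring) (by unfold Qz; ring)
    (by unfold Qz; ring) (by unfold Qz; ring) (by unfold Qz; ring)
    (by unfold Qz; ring) (by unfold Qz; ring) (by unfold Qz; ring)

lemma stepS (σ τ : ℤ) (v : Fin 6 → K) (h : EM σ τ v) :
    EM (σ + 1) τ (tau3 (tau1 (tau2 (tau3 (tau1 (tau2 v)))))) := by
  unfold EM at h ⊢
  have h1 := isM_tau2 h (by ring) (by ring) (by ring)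
  have h2 := isM_tau1 h1 (by ring) (by ring) (by ring)
  have h3 := isM_tau3 h2 (by ring) (by ring) (by ring)
  have h4 := isM_tau2 h3 (by ring) (by ring) (by ring)
  have h5 := isM_tau1 h4 (by ring) (by ring) (by ring)
  have h6 := isM_tau3 h5 (by ring) (by ring) (by ring)
  exact isM_congr h6
    (by unfold Qz; ring) (by unfold Qz; ring) (by unfold Qz; ring)
    (by unfold Qz; ring) (by unfold Qz; ring) (by unfold Qz; ring)
    (by unfold Qz; ring) (by unfold Qz; ring) (by unfold Qz; ring)
    (by unfold Qz; ring) (by unfold Qz; ring) (by unfold Qz; ring)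
    (by unfold Qz; ring) (by unfold Qz; ring) (by unfold Qz; ring)
    (by unfold Qz; ring) (by unfold Qz; ring) (by unfold Qz; ring)

lemma applyWord_append (w1 w2 : List (Fin 3)) (v : Fin 6 → K) :
    applyWord (w1 ++ w2) v = applyWord w2 (applyWord w1 v) := by
  simp [applyWord]

lemma leftLem : ∀ (n : ℕ) (σ τ : ℤ) (v : Fin 6 → K), EM σ τ v →
    EM σ (τ + n) (applyWord ((List.replicate (2 * n) ([0,1,2] : List (Fin 3))).flatten) v) := by
  intro n
  induction n with
  | zero => intro σ τ v h; simpa [applyWord] using h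
  | succ n ih =>
    intro σ τ v h
    have hr : (List.replicate (2 * (n + 1)) ([0,1,2] : List (Fin 3))).flatten
        = (List.replicate (2 * n) ([0,1,2] : List (Fin 3))).flatten
            ++ (([0,1,2] : List (Fin 3)) ++ (([0,1,2] : List (Fin 3)) ++ [])) := by
      rw [show 2 * (n + 1) = 2 * n + 2 by ring, List.replicate_add, List.flatten_append]
      simp
    rw [hr, applyWord_append,
      show (τ + ((n : ℕ) + 1 : ℕ) : ℤ) = (τ + n) + 1 by push_cast; ring]
    exact stepT _ _ _ (ih σ τ v h)

lemma rightLem : ∀ (n : ℕ) (σ τ : ℤ) (v : Fin 6 → K), EM σ τ v →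
    EM (σ + n) τ (applyWord ((List.replicate (2 * n) ([1,0,2] : List (Fin 3))).flatten) v) := by
  intro n
  induction n with
  | zero => intro σ τ v h; simpa [applyWord] using h
  | succ n ih =>
    intro σ τ v h
    have hr : (List.replicate (2 * (n + 1)) ([1,0,2] : List (Fin 3))).flatten
        = (List.replicate (2 * n) ([1,0,2] : List (Fin 3))).flatten
            ++ (([1,0,2] : List (Fin 3)) ++ (([1,0,2] : List (Fin 3)) ++ [])) := by
      rw [show 2 * (n + 1) = 2 * n + 2 by ring, List.replicate_add, List.flatten_append]
      simp
    rw [hr, applyWord_append,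
      show (σ + ((n : ℕ) + 1 : ℕ) : ℤ) = (σ + n) + 1 by push_cast; ring]
    exact stepS _ _ _ (ih σ τ v h)

lemma baseEM : EM 0 0 X0 := by
  have h00 : IsM X0 0 0 0 0 0 0 0 0 0 0 0 0 0 0 0 0 0 0 := by
    refine ⟨?_, ?_, ?_, ?_, ?_, ?_⟩ <;> simp [X0, mono]
  unfold EM
  exact isM_congr h00
    (by unfold Qz; ring) (by unfold Qz; ring) (by unfold Qz; ring)
    (by unfold Qz; ring) (by unfold Qz; ring) (by unfold Qz; ring)
    (by unfold Qz; ring) (by unfold Qz; ring) (by unfold Qz; ring)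
    (by unfold Qz; ring) (by unfold Qz; ring) (by unfold Qz; ring)
    (by unfold Qz; ring) (by unfold Qz; ring) (by unfold Qz; ring)
    (by unfold Qz; ring) (by unfold Qz; ring) (by unfold Qz; ring)

/-- Theorem 2.1, case |i| ≡ 0 mod 6, |j| ≡ 0 mod 3, i = 6s, j = 3t ≥ 0:
the vertex-0 and vertex-1 cluster variables at the even alcove (3s, 3t). -/
theorem alcove_even_00 (s t : ℕ) :
    applyWord (word7 s t) X0 0 =
      x 0 * A ^ (3 * (s : ℤ) ^ 2 + 3 * s * t + 3 * t ^ 2)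
          * B ^ (3 * (s : ℤ) ^ 2 + 3 * s * t + 3 * t ^ 2 + s - t)
          * C ^ (3 * (s : ℤ) ^ 2 + 3 * s * t + 3 * t ^ 2 - s - 2 * t) ∧
    applyWord (word7 s t) X0 1 =
      x 1 * A ^ (3 * (s : ℤ) ^ 2 + 3 * s * t + 3 * t ^ 2)
          * B ^ (3 * (s : ℤ) ^ 2 + 3 * s * t + 3 * t ^ 2 + s - t)
          * C ^ (3 * (s : ℤ) ^ 2 + 3 * s * t + 3 * t ^ 2 - s - 2 * t) := by
  have h1 := leftLem t 0 0 X0 baseEM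
  have h2 := rightLem s 0 (0 + (t : ℤ)) _ h1
  rw [show applyWord (word7 s t) X0
      = applyWord ((List.replicate (2 * s) ([1,0,2] : List (Fin 3))).flatten)
          (applyWord ((List.replicate (2 * t) ([0,1,2] : List (Fin 3))).flatten) X0)
    from by rw [word7, applyWord_append]]
  unfold EM at h2
  have h3 := isM_congr h2
    (show (3 * (s : ℤ) ^ 2 + 3 * s * t + 3 * t ^ 2) = _ by unfold Qz; ring)
    (show (3 * (s : ℤ) ^ 2 + 3 * s * t + 3 * t ^ 2 + s - t) = _ by unfold Qz; ring)
    (show (3 * (s : ℤ) ^ 2 + 3 * s * t + 3 * t ^ 2 - s - 2 * t) = _ by unfold Qz; ring)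
    (show (3 * (s : ℤ) ^ 2 + 3 * s * t + 3 * t ^ 2) = _ by unfold Qz; ring)
    (show (3 * (s : ℤ) ^ 2 + 3 * s * t + 3 * t ^ 2 + s - t) = _ by unfold Qz; ring)
    (show (3 * (s : ℤ) ^ 2 + 3 * s * t + 3 * t ^ 2 - s - 2 * t) = _ by unfold Qz; ring)
    rfl rfl rfl rfl rfl rfl rfl rfl rfl rfl rfl rfl
  obtain ⟨g0, g1, -, -, -, -⟩ := h3
  constructor
  · rw [g0, mono]; ring
  · rw [g1, mono]; ring
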